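/- arXiv:2603.06535 — 6 statements merged into one kernel-verified Lean document; each statement's English description precedes it below -/
import Mathlib

section
/- A directed system of abelian groups (H_α)_{α∈D} over a directed set D is essentially trivial if and only if for every index set J, the colimit colim_α ∏_J H_α is zero. -/
/-- A directed system of abelian groups `(H α)` over a directed set `D`
is essentially trivial iff for every index set `J` the colimit `colim_α ∏_J (H α)` is
zero (expressed elementwise: every element of every `∏_J H α` eventually maps to `0`
componentwise). -/
theorem stmt2 (D : Type) [Preorder D] [IsDirected D (· ≤ ·)]
    (H : D → Type) [∀ α, AddCommGroup (H α)]
    (φ : ∀ ⦃α β : D⦄, α ≤ β → (H α →+ H β))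
    (hrefl : ∀ (α : D) (h : α ≤ α), φ h = AddMonoidHom.id (H α))
    (htrans : ∀ ⦃α β γ : D⦄ (h₁ : α ≤ β) (h₂ : β ≤ γ),
      (φ h₂).comp (φ h₁) = φ (h₁.trans h₂)) :
    (∀ α : D, ∃ β : D, ∃ h : α ≤ β, φ h = 0) ↔
      (∀ (J : Type) (α : D) (x : J → H α),
        ∃ β : D, ∃ h : α ≤ β, ∀ j : J, φ h (x j) = 0) := by
  constructor
  · intro h J α x
    obtain ⟨β, hab, hz⟩ := h α
    exact ⟨β, hab, fun j => by simp [hz]⟩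
  · intro h α
    obtain ⟨β, hab, hz⟩ := h (H α) α id
    exact ⟨β, hab, AddMonoidHom.ext fun y => hz y⟩
end

section
/- Let R be a ring and M an R-module of type FP_n. If 0 → K → P → M → 0 is a short exact sequence of R-modules with P finitely generated projective, then K is of type FP_{n-1}. -/
/-!
A module is of type `FP_n` exactly when it has a partial resolution `Q_n → ⋯ → Q_0 → M → 0`
by finitely generated projectives (`IsFP R n M`): a projective resolution that is finitely
generated up to degree `n` truncates to one, and conversely the successive syzygies of such an
`M` can be resolved by finite free covers. By Schanuel's lemma the kernels `K ⊆ P` and `L ⊆ Q`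
of two finitely generated projective covers of `M` satisfy `K × Q ≃ L × P`. Since `IsFP R n` is
unchanged by adding or cancelling a finitely generated projective factor, `K` inherits `FP_{n-1}`
from the kernel `L` of the first step of a partial resolution of `M`.
-/

open CategoryTheory

/-- An `R`-module `M` is of type `FP_n` if it admits a projective resolution that is
finitely generated in degrees `≤ n`. -/
def IsTypeFP (R : Type) [Ring R] (M : ModuleCat R) (n : ℕ) : Prop :=
  ∃ res : ProjectiveResolution M, ∀ i ≤ n, Module.Finite R (res.complex.X i)

universe u v

variable {R : Type u} [Ring R]

section LinearAlgebra

variable {K L P M N Q : Type v} [AddCommGroup K] [Module R K] [AddCommGroup L] [Module R L]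
  [AddCommGroup P] [Module R P] [AddCommGroup M] [Module R M] [AddCommGroup N] [Module R N]
  [AddCommGroup Q] [Module R Q]

lemma Function.Exact.nonempty_linearEquiv_prod [Module.Projective R M] {f : K →ₗ[R] N}
    {g : N →ₗ[R] M} (hfg : Function.Exact f g) (hf : Function.Injective f)
    (hg : Function.Surjective g) : Nonempty (N ≃ₗ[R] K × M) := by
  obtain ⟨l, hl⟩ := g.exists_rightInverse_of_surjective (LinearMap.range_eq_top.2 hg)
  exact ⟨(hfg.splitSurjectiveEquiv hf ⟨l, hl⟩).1⟩

/-- `ker (g.coprod p)` is the pullback of `g` and `-p`; its projection to `Q` is onto, with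
kernel `K`, and splits. -/
lemma nonempty_ker_coprod_equiv_prod [Module.Projective R Q] {f : K →ₗ[R] P} {g : P →ₗ[R] M}
    (hf : Function.Injective f) (hg : Function.Surjective g) (hfg : Function.Exact f g)
    (p : Q →ₗ[R] M) : Nonempty (LinearMap.ker (g.coprod p) ≃ₗ[R] K × Q) := by
  have hf_ker (k : K) : (f k, (0 : Q)) ∈ LinearMap.ker (g.coprod p) := by
    simp [hfg.apply_apply_eq_zero]
  let ι : K →ₗ[R] LinearMap.ker (g.coprod p) :=
    LinearMap.codRestrict _ (LinearMap.inl R P Q ∘ₗ f) hf_ker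
  let π : LinearMap.ker (g.coprod p) →ₗ[R] Q := LinearMap.snd R P Q ∘ₗ Submodule.subtype _
  have hι : Function.Injective ι := fun a b h => hf (congrArg (fun x => x.1.1) h)
  have hπ : Function.Surjective π := by
    intro q
    obtain ⟨a, ha⟩ := hg (-p q)
    exact ⟨⟨(a, q), by simp [ha]⟩, rfl⟩
  have hιπ : Function.Exact ι π := by
    rintro ⟨⟨a, q⟩, hx⟩
    have hx : g a + p q = 0 := hx
    constructor
    · rintro (rfl : q = 0)
      obtain ⟨k, rfl⟩ := (hfg a).1 (by simpa using hx)
      exact ⟨k, rfl⟩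
    · rintro ⟨k, hk⟩
      exact (congrArg (fun x => x.1.2) hk).symm
  exact hιπ.nonempty_linearEquiv_prod hι hπ

lemma map_prodComm_ker_coprod (g : P →ₗ[R] M) (p : Q →ₗ[R] M) :
    (LinearMap.ker (g.coprod p)).map (LinearEquiv.prodComm R P Q).toLinearMap =
      LinearMap.ker (p.coprod g) := by
  ext ⟨q, a⟩
  simp [add_comm]

theorem schanuel [Module.Projective R P] [Module.Projective R Q]
    {f : K →ₗ[R] P} {g : P →ₗ[R] M} {i : L →ₗ[R] Q} {p : Q →ₗ[R] M}
    (hf : Function.Injective f) (hg : Function.Surjective g) (hfg : Function.Exact f g)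
    (hi : Function.Injective i) (hp : Function.Surjective p) (hip : Function.Exact i p) :
    Nonempty ((K × Q) ≃ₗ[R] L × P) := by
  obtain ⟨e₁⟩ := nonempty_ker_coprod_equiv_prod hf hg hfg p
  obtain ⟨e₂⟩ := nonempty_ker_coprod_equiv_prod hi hp hip g
  exact ⟨e₁.symm ≪≫ₗ
    (LinearEquiv.prodComm R P Q).ofSubmodules _ _ (map_prodComm_ker_coprod g p) ≪≫ₗ e₂⟩

def IsFP (R : Type u) [Ring R] : ℕ → (M : Type v) → [AddCommGroup M] → [Module R M] → Prop
  | 0, M, _, _ => Module.Finite R M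
  | n + 1, M, _, _ => ∃ (K Q : Type v) (_ : AddCommGroup K) (_ : Module R K)
      (_ : AddCommGroup Q) (_ : Module R Q), Module.Finite R Q ∧ Module.Projective R Q ∧
      ∃ (i : K →ₗ[R] Q) (p : Q →ₗ[R] M), Function.Injective i ∧ Function.Surjective p ∧
        Function.Exact i p ∧ IsFP R n K

lemma isFP_succ_of_exact {n : ℕ} [Module.Finite R P] [Module.Projective R P]
    (f : K →ₗ[R] P) (g : P →ₗ[R] M) (hf : Function.Injective f) (hg : Function.Surjective g)
    (hfg : Function.Exact f g) (hK : IsFP R n K) : IsFP R (n + 1) M :=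
  ⟨K, P, _, _, _, _, inferInstance, inferInstance, f, g, hf, hg, hfg, hK⟩

lemma isFP_succ_of_isFP_range [Module.Finite R P] [Module.Projective R P] {n : ℕ}
    {f : N →ₗ[R] P} {g : P →ₗ[R] M} (hg : Function.Surjective g) (hfg : Function.Exact f g)
    (h : IsFP R n (LinearMap.range f)) : IsFP R (n + 1) M :=
  isFP_succ_of_exact _ g (Submodule.injective_subtype _) hg
    (by rwa [LinearMap.exact_iff, Submodule.range_subtype, ← LinearMap.exact_iff]) h

namespace IsFP

lemma finite {n : ℕ} (h : IsFP R n M) : Module.Finite R M := by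
  cases n with
  | zero => exact h
  | succ n =>
    obtain ⟨_, _, _, _, _, _, _, _, _, p, _, hp, _⟩ := h
    exact Module.Finite.of_surjective p hp

lemma of_equiv (e : M ≃ₗ[R] N) : ∀ {n : ℕ}, IsFP R n M → IsFP R n N
  | 0, h => by
    have : Module.Finite R M := h
    exact Module.Finite.equiv e
  | _ + 1, ⟨K, Q, _, _, _, _, _, _, i, p, hi, hp, hip, hK⟩ =>
    ⟨K, Q, _, _, _, _, ‹_›, ‹_›, i, e.toLinearMap ∘ₗ p, hi, e.surjective.comp hp,
      e.postcomp_exact_iff_exact.mpr hip, hK⟩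

lemma prod_right [Module.Finite R Q] [Module.Projective R Q] :
    ∀ {n : ℕ}, IsFP R n M → IsFP R n (M × Q)
  | 0, h => by
    have : Module.Finite R M := h
    exact (inferInstance : Module.Finite R (M × Q))
  | _ + 1, ⟨K, Q₀, _, _, _, _, _, _, i, p, hi, hp, hip, hK⟩ => by
    refine isFP_succ_of_exact (P := Q₀ × Q) (LinearMap.inl R Q₀ Q ∘ₗ i)
      (p.prodMap LinearMap.id) (LinearMap.inl_injective.comp hi)
      (hp.prodMap Function.surjective_id) ?_ hK
    rintro ⟨a, b⟩
    simp only [LinearMap.prodMap_apply, LinearMap.id_apply, Prod.mk_eq_zero, hip a,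
      Set.mem_range, LinearMap.comp_apply, LinearMap.inl_apply, Prod.mk.injEq]
    tauto

lemma of_exact_of_projective [Module.Finite R M] [Module.Projective R M] {n : ℕ}
    {f : K →ₗ[R] N} {g : N →ₗ[R] M} (hf : Function.Injective f) (hg : Function.Surjective g)
    (hfg : Function.Exact f g) (hK : IsFP R n K) : IsFP R n N := by
  obtain ⟨e⟩ := hfg.nonempty_linearEquiv_prod hf hg
  exact hK.prod_right.of_equiv e.symm

lemma of_prod_right [Module.Finite R Q] [Module.Projective R Q] :
    ∀ {n : ℕ}, IsFP R n (M × Q) → IsFP R n M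
  | 0, h => by
    have : Module.Finite R (M × Q) := h
    exact Module.Finite.of_surjective (LinearMap.fst R M Q) Prod.fst_surjective
  | n + 1, ⟨K, Q₀, _, _, _, _, _, _, i, p, hi, hp, hip, hK⟩ => by
    set g := LinearMap.fst R M Q ∘ₗ p
    have hi_ker (k : K) : i k ∈ LinearMap.ker g := by simp [g, hip.apply_apply_eq_zero]
    have hK' : IsFP R n (LinearMap.ker g) := by
      refine hK.of_exact_of_projective (f := LinearMap.codRestrict _ i hi_ker)
        (g := LinearMap.snd R M Q ∘ₗ p ∘ₗ (LinearMap.ker g).subtype) ?_ ?_ ?_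
      · exact fun a b h => hi (congrArg Subtype.val h)
      · intro q
        obtain ⟨x, hx⟩ := hp (0, q)
        exact ⟨⟨x, by simp [g, hx]⟩, by simp [hx]⟩
      · rintro ⟨x, hx⟩
        have hx : (p x).1 = 0 := hx
        have hpx : (p x).2 = 0 ↔ p x = 0 := by simp [Prod.ext_iff, hx]
        simp only [LinearMap.comp_apply, Submodule.subtype_apply, LinearMap.snd_apply, hpx, hip x,
          Set.mem_range, Subtype.ext_iff, LinearMap.codRestrict_apply]
    exact isFP_succ_of_exact _ g (Submodule.injective_subtype _)
      (Prod.fst_surjective.comp hp) (LinearMap.exact_subtype_ker_map g) hK'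

theorem left_of_exact_of_succ [Module.Finite R P] [Module.Projective R P] {n : ℕ}
    {f : K →ₗ[R] P} {g : P →ₗ[R] M} (hf : Function.Injective f) (hg : Function.Surjective g)
    (hfg : Function.Exact f g) (hM : IsFP R (n + 1) M) : IsFP R n K := by
  obtain ⟨L, Q, _, _, _, _, _, _, i, p, hi, hp, hip, hL⟩ := hM
  obtain ⟨e⟩ := schanuel hi hp hip hf hg hfg
  exact (hL.prod_right.of_equiv e).of_prod_right

end IsFP

end LinearAlgebra

namespace CategoryTheory.ProjectiveResolution

variable {M : ModuleCat.{v} R} (res : ProjectiveResolution M)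

lemma function_exact_succ (i : ℕ) :
    Function.Exact (res.complex.d (i + 2) (i + 1)).hom (res.complex.d (i + 1) i).hom :=
  (ShortComplex.ShortExact.moduleCat_exact_iff_function_exact _).1 (res.exact_succ i)

variable [Small.{v} R]

lemma isFP_range_d {n : ℕ} (hfin : ∀ i ≤ n, Module.Finite R (res.complex.X i)) :
    ∀ k i, i + k + 1 ≤ n → IsFP R k (LinearMap.range (res.complex.d (i + 1) i).hom)
  | 0, i, hi => by
    have := hfin (i + 1) hi
    exact Module.Finite.range _
  | k + 1, i, hi => by
    have := hfin (i + 1) (by omega)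
    refine isFP_succ_of_isFP_range (LinearMap.surjective_rangeRestrict _) ?_
      (isFP_range_d hfin k (i + 1) (by omega))
    rw [LinearMap.exact_iff, LinearMap.ker_rangeRestrict,
      (res.function_exact_succ i).linearMap_ker_eq]

lemma isFP {n : ℕ} (hfin : ∀ i ≤ n, Module.Finite R (res.complex.X i)) : IsFP R n M := by
  have hε : Function.Surjective (res.π.f 0).hom :=
    (ModuleCat.epi_iff_surjective _).1 inferInstance
  have := hfin 0 (Nat.zero_le _)
  cases n with
  | zero => exact Module.Finite.of_surjective _ hε
  | succ k =>
    exact isFP_succ_of_isFP_range hε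
      ((ShortComplex.ShortExact.moduleCat_exact_iff_function_exact _).1 res.exact₀)
      (res.isFP_range_d hfin k 0 (by omega))

end CategoryTheory.ProjectiveResolution

namespace ModuleCat

variable {M : ModuleCat.{v} R}

noncomputable def projectiveResolutionOfExact (X : ℕ → ModuleCat.{v} R) [∀ i, Projective (X i)]
    (d : ∀ i, X (i + 1) ⟶ X i) (ε : X 0 ⟶ M) (hε : Function.Surjective ε.hom)
    (h₀ : Function.Exact (d 0).hom ε.hom) (hd : ∀ i, Function.Exact (d (i + 1)).hom (d i).hom) :
    ProjectiveResolution M where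
  complex := ChainComplex.of X d fun i => ModuleCat.hom_ext (hd i).linearMap_comp_eq_zero
  π := (ChainComplex.toSingle₀Equiv _ M).symm ⟨ε, ModuleCat.hom_ext h₀.linearMap_comp_eq_zero⟩
  quasiIso := ⟨fun n => by
    cases n with
    | zero =>
      rw [ChainComplex.quasiIsoAt₀_iff, ShortComplex.quasiIso_iff_of_zeros']
      · refine (ShortComplex.exact_and_epi_g_iff_of_iso
          (S₂ := ShortComplex.mk (d 0) ε (ModuleCat.hom_ext h₀.linearMap_comp_eq_zero)) ?_).2
          ⟨(ShortComplex.ShortExact.moduleCat_exact_iff_function_exact _).2 h₀,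
            (ModuleCat.epi_iff_surjective ε).2 hε⟩
        exact ShortComplex.isoMk (Iso.refl _) (Iso.refl _) (Iso.refl _) rfl rfl
      all_goals rfl
    | succ n =>
      rw [quasiIsoAt_iff_exactAt' _ _ (ChainComplex.exactAt_succ_single_obj _ _),
        HomologicalComplex.exactAt_iff' _ (n + 1 + 1) (n + 1) n (by simp) (by simp),
        ShortComplex.ShortExact.moduleCat_exact_iff_function_exact]
      simp only [HomologicalComplex.sc', HomologicalComplex.shortComplexFunctor',
        ChainComplex.of_d]
      exact hd n⟩

end ModuleCat

lemma exists_span_eq_top_finite (N : Type v) [AddCommGroup N] [Module R N] :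
    ∃ s : Set N, Submodule.span R s = ⊤ ∧ (Module.Finite R N → s.Finite) := by
  by_cases hN : Module.Finite R N
  · obtain ⟨s, hs⟩ := hN.fg_top
    exact ⟨s, hs, fun _ => s.finite_toSet⟩
  · exact ⟨Set.univ, Submodule.span_univ, fun h => absurd h hN⟩

noncomputable def generatingSet (R : Type u) [Ring R] (N : Type v) [AddCommGroup N] [Module R N] :
    Set N :=
  (exists_span_eq_top_finite (R := R) N).choose

noncomputable def freeCover (N : ModuleCat.{u} R) : ModuleCat.{u} R :=
  ModuleCat.of R (generatingSet R N →₀ R)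

instance (N : ModuleCat.{u} R) : Projective (freeCover N) :=
  ModuleCat.projective_of_free Finsupp.basisSingleOne

noncomputable def freeCoverπ (N : ModuleCat.{u} R) : freeCover N ⟶ N :=
  ModuleCat.ofHom (Finsupp.linearCombination R Subtype.val)

lemma freeCoverπ_surjective (N : ModuleCat.{u} R) : Function.Surjective (freeCoverπ N).hom := by
  change Function.Surjective (Finsupp.linearCombination R _)
  rw [← LinearMap.range_eq_top, Finsupp.range_linearCombination, Subtype.range_coe]
  exact (exists_span_eq_top_finite (R := R) N).choose_spec.1

lemma finite_freeCover (N : ModuleCat.{u} R) [Module.Finite R N] :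
    Module.Finite R (freeCover N) :=
  have : Finite (generatingSet R N) :=
    ((exists_span_eq_top_finite (R := R) N).choose_spec.2 inferInstance).to_subtype
  inferInstanceAs (Module.Finite R (generatingSet R N →₀ R))

noncomputable def syzygy (N : ModuleCat.{u} R) : ℕ → ModuleCat.{u} R
  | 0 => N
  | i + 1 => ModuleCat.of R (LinearMap.ker (freeCoverπ (syzygy N i)).hom)

lemma exact_freeCoverπ_ker (N : ModuleCat.{u} R) :
    Function.Exact (freeCoverπ (ModuleCat.of R (LinearMap.ker (freeCoverπ N).hom)) ≫
      ModuleCat.ofHom (Submodule.subtype _)).hom (freeCoverπ N).hom :=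
  (freeCoverπ_surjective _).comp_exact_iff_exact.2 (LinearMap.exact_subtype_ker_map _)

noncomputable def freeResolution (N : ModuleCat.{u} R) : ProjectiveResolution N :=
  ModuleCat.projectiveResolutionOfExact (fun i => freeCover (syzygy N i))
    (fun i => freeCoverπ (syzygy N (i + 1)) ≫ ModuleCat.ofHom (Submodule.subtype _))
    (freeCoverπ N) (freeCoverπ_surjective N) (exact_freeCoverπ_ker N)
    fun i => (Submodule.injective_subtype _).comp_exact_iff_exact.2
      (exact_freeCoverπ_ker (syzygy N (i + 1)))

lemma isFP_syzygy {N : ModuleCat.{u} R} {k : ℕ} :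
    ∀ {i : ℕ}, IsFP R (k + i) N → IsFP R k (syzygy N i)
  | 0, h => h
  | i + 1, h => by
    have h' : IsFP R (k + 1) (syzygy N i) := isFP_syzygy (by rwa [Nat.add_right_comm])
    have := h'.finite
    have := finite_freeCover (syzygy N i)
    exact h'.left_of_exact_of_succ (Submodule.injective_subtype _) (freeCoverπ_surjective _)
      (LinearMap.exact_subtype_ker_map _)

theorem isTypeFP_iff_isFP {R : Type} [Ring R] {N : ModuleCat.{0} R} {n : ℕ} :
    IsTypeFP R N n ↔ IsFP R n N := by
  refine ⟨fun ⟨res, hfin⟩ => res.isFP hfin, fun h => ⟨freeResolution N, fun i hi => ?_⟩⟩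
  have := (isFP_syzygy (i := i) (k := n - i) (by rwa [Nat.sub_add_cancel hi])).finite
  exact finite_freeCover (syzygy N i)

/-- If `M` is of type `FP_n` and `0 → K → P → M → 0` is a short exact
sequence of `R`-modules with `P` finitely generated projective, then `K` is of type
`FP_{n-1}`. -/
theorem stmt3 (R : Type) [Ring R] (n : ℕ) (hn : 1 ≤ n)
    (M K P : Type) [AddCommGroup M] [AddCommGroup K] [AddCommGroup P]
    [Module R M] [Module R K] [Module R P]
    [Module.Finite R P] [Module.Projective R P]
    (f : K →ₗ[R] P) (g : P →ₗ[R] M)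
    (hf : Function.Injective f) (hg : Function.Surjective g)
    (hfg : Function.Exact f g)
    (hM : IsTypeFP R (ModuleCat.of R M) n) :
    IsTypeFP R (ModuleCat.of R K) (n - 1) := by
  obtain ⟨m, rfl⟩ := Nat.exists_eq_add_of_le' hn
  rw [isTypeFP_iff_isFP] at hM ⊢
  exact hM.left_of_exact_of_succ hf hg hfg
end

section
/- Let R be a ring and let M, N be R-modules. Then M ⊕ N is of type FP_n if and only if both M and N are of type FP_n. -/
open CategoryTheory

/-!
An `R`-module `M` is of type `FP_n` exactly when it is finitely generated and, for `n > 0`, the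
kernel of some finite free cover `Rᵏ → M` is of type `FP_{n-1}`. Covers of `M` and `N` add up to
a cover of `M × N` whose kernel is the product of their kernels, which gives one direction by
induction on `n`. Conversely, by Schanuel's lemma the kernels of two projective covers of the
same module agree up to projective summands; so the kernel of a product cover `Rᵃ × Rᵇ → M × N`
is of type `FP_{n-1}` after adding a free summand, and induction removes the summands.
-/

open LinearMap Function

namespace Submodule

variable {R A B : Type*} [Ring R] [AddCommGroup A] [AddCommGroup B] [Module R A] [Module R B]

def prodEquiv (p : Submodule R A) (q : Submodule R B) : p.prod q ≃ₗ[R] p × q where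
  toFun x := (⟨x.1.1, x.2.1⟩, ⟨x.1.2, x.2.2⟩)
  invFun y := ⟨(y.1, y.2), y.1.2, y.2.2⟩
  map_add' _ _ := rfl
  map_smul' _ _ := rfl
  left_inv _ := rfl
  right_inv _ := rfl

end Submodule

section Schanuel

variable {R M P Q : Type*} [Ring R] [AddCommGroup M] [AddCommGroup P] [AddCommGroup Q]
  [Module R M] [Module R P] [Module R Q]

lemma mem_ker_pullback_iff (f : P →ₗ[R] M) (g : Q →ₗ[R] M) (x : P × Q) :
    x ∈ ker (f ∘ₗ fst R P Q - g ∘ₗ snd R P Q) ↔ f x.1 = g x.2 := by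
  simp [sub_eq_zero]

def kerProdEquivPullback (f : P →ₗ[R] M) (g : Q →ₗ[R] M) (σ : Q →ₗ[R] P) (hσ : f ∘ₗ σ = g) :
    (ker f × Q) ≃ₗ[R] ker (f ∘ₗ fst R P Q - g ∘ₗ snd R P Q) where
  toFun x := ⟨(x.1 + σ x.2, x.2), by
    rw [mem_ker_pullback_iff, map_add, mem_ker.1 x.1.2, zero_add, ← comp_apply f σ, hσ]⟩
  invFun y := (⟨y.1.1 - σ y.1.2, by
    rw [mem_ker, map_sub, (mem_ker_pullback_iff f g y.1).1 y.2, ← comp_apply f σ, hσ, sub_self]⟩,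
    y.1.2)
  map_add' x y := by ext <;> simp [add_add_add_comm]
  map_smul' c x := by ext <;> simp
  left_inv x := by ext <;> simp
  right_inv y := by ext <;> simp

def pullbackSwap (f : P →ₗ[R] M) (g : Q →ₗ[R] M) :
    ker (g ∘ₗ fst R Q P - f ∘ₗ snd R Q P) ≃ₗ[R] ker (f ∘ₗ fst R P Q - g ∘ₗ snd R P Q) where
  toFun y := ⟨y.1.swap, (mem_ker_pullback_iff f g _).2 ((mem_ker_pullback_iff g f _).1 y.2).symm⟩
  invFun y := ⟨y.1.swap, (mem_ker_pullback_iff g f _).2 ((mem_ker_pullback_iff f g _).1 y.2).symm⟩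
  map_add' _ _ := rfl
  map_smul' _ _ := rfl
  left_inv _ := rfl
  right_inv _ := rfl

theorem schanuel_s4 [Module.Projective R P] [Module.Projective R Q]
    {f : P →ₗ[R] M} {g : Q →ₗ[R] M} (hf : Surjective f) (hg : Surjective g) :
    Nonempty ((ker f × Q) ≃ₗ[R] (ker g × P)) := by
  obtain ⟨σ, hσ⟩ := Module.projective_lifting_property f g hf
  obtain ⟨τ, hτ⟩ := Module.projective_lifting_property g f hg
  exact ⟨(kerProdEquivPullback f g σ hσ).trans
    ((pullbackSwap f g).symm.trans (kerProdEquivPullback g f τ hτ).symm)⟩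

end Schanuel

def HasFGFreeResolution (R : Type) [Ring R] : ℕ → ∀ (M : Type) [AddCommGroup M] [Module R M], Prop
  | 0, M, _, _ => Module.Finite R M
  | n + 1, M, _, _ => ∃ (k : ℕ) (f : (Fin k → R) →ₗ[R] M),
      Surjective f ∧ HasFGFreeResolution R n (ker f)

namespace HasFGFreeResolution

variable {R : Type} [Ring R] {n : ℕ} {A B : Type} [AddCommGroup A] [AddCommGroup B]
  [Module R A] [Module R B]

lemma of_equiv (h : HasFGFreeResolution R n A) (e : A ≃ₗ[R] B) : HasFGFreeResolution R n B := by
  induction n generalizing A B with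
  | zero =>
    have : Module.Finite R A := h
    exact Module.Finite.equiv e
  | succ n ih =>
    obtain ⟨k, f, hf, hker⟩ := h
    refine ⟨k, e.toLinearMap ∘ₗ f, e.surjective.comp hf, ?_⟩
    rw [ker_comp, LinearEquiv.ker, Submodule.comap_bot]
    exact ih hker (LinearEquiv.refl R _)

lemma of_subsingleton [Subsingleton A] : HasFGFreeResolution R n A := by
  induction n generalizing A with
  | zero => exact Module.Finite.of_finite
  | succ n ih => exact ⟨0, 0, fun _ => ⟨0, Subsingleton.elim _ _⟩, ih⟩

lemma finFree (k : ℕ) : HasFGFreeResolution R n (Fin k → R) := by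
  cases n with
  | zero => exact Module.Finite.pi
  | succ n =>
    refine ⟨k, LinearMap.id, surjective_id, ?_⟩
    rw [ker_id]
    exact of_subsingleton

lemma prod (hA : HasFGFreeResolution R n A) (hB : HasFGFreeResolution R n B) :
    HasFGFreeResolution R n (A × B) := by
  induction n generalizing A B with
  | zero =>
    have : Module.Finite R A := hA
    have : Module.Finite R B := hB
    exact Module.Finite.prod
  | succ n ih =>
    obtain ⟨k, f, hf, hkf⟩ := hA
    obtain ⟨l, g, hg, hkg⟩ := hB
    let e : (Fin (k + l) → R) ≃ₗ[R] (Fin k → R) × (Fin l → R) :=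
      (LinearEquiv.funCongrLeft R R finSumFinEquiv).trans
        (LinearEquiv.sumArrowLequivProdArrow _ _ R R)
    refine ⟨k + l, prodMap f g ∘ₗ e.toLinearMap,
      (Prod.map_surjective.2 ⟨hf, hg⟩).comp e.surjective, ?_⟩
    have hker : HasFGFreeResolution R n (ker (prodMap f g)) := by
      rw [ker_prodMap]
      exact (ih hkf hkg).of_equiv (Submodule.prodEquiv _ _).symm
    rw [ker_comp]
    exact hker.of_equiv (e.ofSubmodule' _).symm

lemma ker_prod_of_ker {M P Q : Type} [AddCommGroup M] [AddCommGroup P] [AddCommGroup Q]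
    [Module R M] [Module R P] [Module R Q] [Module.Projective R P] [Module.Projective R Q]
    {f : P →ₗ[R] M} {g : Q →ₗ[R] M} (hf : Surjective f) (hg : Surjective g)
    (hker : HasFGFreeResolution R n (ker f)) (hQ : HasFGFreeResolution R n Q) :
    HasFGFreeResolution R n (ker g × P) :=
  (hker.prod hQ).of_equiv (schanuel_s4 hf hg).some

lemma of_prod_left (h : HasFGFreeResolution R n (A × B)) : HasFGFreeResolution R n A := by
  induction n generalizing A B with
  | zero =>
    have : Module.Finite R (A × B) := h
    exact Module.Finite.of_surjective (fst R A B) Prod.fst_surjective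
  | succ n ih =>
    obtain ⟨k, f, hf, hker⟩ := h
    have : Module.Finite R (A × B) := Module.Finite.of_surjective f hf
    have : Module.Finite R A := Module.Finite.of_surjective (fst R A B) Prod.fst_surjective
    have : Module.Finite R B := Module.Finite.of_surjective (snd R A B) Prod.snd_surjective
    obtain ⟨a, gA, hgA⟩ := Module.Finite.exists_fin' R A
    obtain ⟨b, gB, hgB⟩ := Module.Finite.exists_fin' R B
    have hg : HasFGFreeResolution R n (ker (prodMap gA gB) × (Fin k → R)) :=
      ker_prod_of_ker hf (Prod.map_surjective.2 ⟨hgA, hgB⟩) hker ((finFree a).prod (finFree b))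
    have hkerAB : HasFGFreeResolution R n (ker gA × ker gB) :=
      (ih hg).of_equiv ((LinearEquiv.ofEq _ _ (ker_prodMap gA gB)).trans (Submodule.prodEquiv _ _))
    exact ⟨a, gA, hgA, ih hkerAB⟩

end HasFGFreeResolution

lemma hasFGFreeResolution_prod_iff {R : Type} [Ring R] {n : ℕ} {A B : Type} [AddCommGroup A]
    [AddCommGroup B] [Module R A] [Module R B] :
    HasFGFreeResolution R n (A × B) ↔ HasFGFreeResolution R n A ∧ HasFGFreeResolution R n B :=
  ⟨fun h => ⟨h.of_prod_left, (h.of_equiv (LinearEquiv.prodComm R A B)).of_prod_left⟩,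
   fun h => h.1.prod h.2⟩

/-- A projective resolution `⋯ → P 1 → P 0 → M → 0` given by linear maps, so that it can be
truncated (`tail`) and extended (`cons`) by linear algebra. -/
structure ResolutionData (R : Type) [Ring R] (M : Type) [AddCommGroup M] [Module R M] where
  P : ℕ → ModuleCat.{0} R
  projective : ∀ n, Projective (P n)
  d : ∀ n, P (n + 1) →ₗ[R] P n
  π : P 0 →ₗ[R] M
  surjective_π : Surjective π
  range_d_zero : range (d 0) = ker π
  range_d_succ : ∀ n, range (d (n + 1)) = ker (d n)

namespace ResolutionData

variable {R : Type} [Ring R] {M : Type} [AddCommGroup M] [Module R M] (D : ResolutionData R M)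

lemma d_comp_d (n : ℕ) : D.d n ∘ₗ D.d (n + 1) = 0 :=
  LinearMap.range_le_ker_iff.1 (D.range_d_succ n).le

lemma π_comp_d : D.π ∘ₗ D.d 0 = 0 :=
  LinearMap.range_le_ker_iff.1 D.range_d_zero.le

noncomputable def complex : ChainComplex (ModuleCat R) ℕ :=
  ChainComplex.of D.P (fun n => ModuleCat.ofHom (D.d n))
    (fun n => ModuleCat.hom_ext (D.d_comp_d n))

lemma complex_d (n : ℕ) : D.complex.d (n + 1) n = ModuleCat.ofHom (D.d n) :=
  ChainComplex.of_d D.P (fun n => ModuleCat.ofHom (D.d n)) n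

noncomputable def augmentation :
    D.complex ⟶ (ChainComplex.single₀ (ModuleCat R)).obj (ModuleCat.of R M) :=
  (ChainComplex.toSingle₀Equiv _ _).symm
    ⟨ModuleCat.ofHom D.π, by rw [D.complex_d]; exact ModuleCat.hom_ext D.π_comp_d⟩

lemma augmentation_f_zero : D.augmentation.f 0 = ModuleCat.ofHom D.π :=
  ChainComplex.toSingle₀Equiv_symm_apply_f_zero _ _

lemma quasiIsoAt_augmentation (n : ℕ) : QuasiIsoAt D.augmentation n := by
  cases n with
  | zero =>
    rw [ChainComplex.quasiIsoAt₀_iff, ShortComplex.quasiIso_iff_of_zeros' _ rfl rfl rfl]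
    constructor
    · rw [ShortComplex.moduleCat_exact_iff_range_eq_ker]
      change range (D.complex.d 1 0).hom = ker (D.augmentation.f 0).hom
      rw [D.augmentation_f_zero, D.complex_d]
      exact D.range_d_zero
    · change Epi (D.augmentation.f 0)
      rw [D.augmentation_f_zero]
      exact (ModuleCat.epi_iff_surjective _).2 D.surjective_π
  | succ n =>
    rw [quasiIsoAt_iff_exactAt' _ _ (ChainComplex.exactAt_succ_single_obj _ _),
      HomologicalComplex.exactAt_iff' _ (n + 2) (n + 1) n (by simp) (by simp),
      ShortComplex.moduleCat_exact_iff_range_eq_ker]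
    change range (D.complex.d (n + 2) (n + 1)).hom = ker (D.complex.d (n + 1) n).hom
    rw [D.complex_d, D.complex_d]
    exact D.range_d_succ n

noncomputable def toProjectiveResolution : ProjectiveResolution (ModuleCat.of R M) where
  complex := D.complex
  projective := D.projective
  π := D.augmentation
  quasiIso := ⟨D.quasiIsoAt_augmentation⟩

noncomputable def ofProjectiveResolution (res : ProjectiveResolution (ModuleCat.of R M)) :
    ResolutionData R M where
  P n := res.complex.X n
  projective := res.projective
  d n := (res.complex.d (n + 1) n).hom
  π := (res.π.f 0).hom
  surjective_π := (ModuleCat.epi_iff_surjective (res.π.f 0)).1 inferInstance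
  range_d_zero := res.exact₀.moduleCat_range_eq_ker
  range_d_succ n := (res.exact_succ n).moduleCat_range_eq_ker

noncomputable def cons (P₀ : Type) [AddCommGroup P₀] [Module R P₀] [Module.Projective R P₀]
    (f : P₀ →ₗ[R] M) (hf : Surjective f) (D : ResolutionData R (ker f)) : ResolutionData R M where
  P
    | 0 => ModuleCat.of R P₀
    | n + 1 => D.P n
  projective
    | 0 => (IsProjective.iff_projective P₀).1 inferInstance
    | n + 1 => D.projective n
  d
    | 0 => (ker f).subtype ∘ₗ D.π
    | n + 1 => D.d n
  π := f
  surjective_π := hf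
  range_d_zero := by
    rw [range_comp, range_eq_top.2 D.surjective_π, Submodule.map_top, Submodule.range_subtype]
  range_d_succ
    | 0 => by
      change range (D.d 0) = ker ((ker f).subtype ∘ₗ D.π)
      rw [ker_comp, Submodule.ker_subtype]
      exact D.range_d_zero
    | n + 1 => D.range_d_succ n

noncomputable def tail : ResolutionData R (ker D.π) where
  P n := D.P (n + 1)
  projective n := D.projective (n + 1)
  d n := D.d (n + 1)
  π := codRestrict (ker D.π) (D.d 0) (fun x => by rw [← D.range_d_zero]; exact mem_range_self _ x)
  surjective_π y := by
    obtain ⟨x, hx⟩ : (y : D.P 0) ∈ range (D.d 0) := by rw [D.range_d_zero]; exact y.2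
    exact ⟨x, Subtype.ext hx⟩
  range_d_zero := by
    rw [ker_codRestrict]
    exact D.range_d_succ 0
  range_d_succ n := D.range_d_succ (n + 1)

end ResolutionData

section

variable {R : Type} [Ring R] {M : Type} [AddCommGroup M] [Module R M]

lemma ResolutionData.hasFGFreeResolution {n : ℕ} (D : ResolutionData R M)
    (hD : ∀ i ≤ n, Module.Finite R (D.P i)) : HasFGFreeResolution R n M := by
  induction n generalizing M with
  | zero =>
    have := hD 0 le_rfl
    exact Module.Finite.of_surjective D.π D.surjective_π
  | succ n ih =>
    have := hD 0 (Nat.zero_le _)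
    have : Module.Finite R M := Module.Finite.of_surjective D.π D.surjective_π
    have : Module.Projective R (D.P 0) := (IsProjective.iff_projective _).2 (D.projective 0)
    obtain ⟨k, g, hg⟩ := Module.Finite.exists_fin' R M
    have hker : HasFGFreeResolution R n (ker D.π) :=
      ih D.tail fun i hi => hD (i + 1) (Nat.succ_le_succ hi)
    exact ⟨k, g, hg, (hker.ker_prod_of_ker D.surjective_π hg (.finFree k)).of_prod_left⟩

lemma HasFGFreeResolution.exists_resolutionData {n : ℕ} (h : HasFGFreeResolution R n M) :
    ∃ D : ResolutionData R M, ∀ i ≤ n, Module.Finite R (D.P i) := by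
  induction n generalizing M with
  | zero =>
    have : Module.Finite R M := h
    obtain ⟨k, f, hf⟩ := Module.Finite.exists_fin' R M
    refine ⟨.cons (Fin k → R) f hf (.ofProjectiveResolution (projectiveResolution _)), ?_⟩
    intro i hi
    obtain rfl := Nat.le_zero.1 hi
    exact Module.Finite.pi
  | succ n ih =>
    obtain ⟨k, f, hf, hker⟩ := h
    obtain ⟨D, hD⟩ := ih hker
    refine ⟨.cons (Fin k → R) f hf D, ?_⟩
    rintro (_ | i) hi
    · exact Module.Finite.pi
    · exact hD i (Nat.le_of_succ_le_succ hi)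

lemma isTypeFP_iff_hasFGFreeResolution {n : ℕ} :
    IsTypeFP R (ModuleCat.of R M) n ↔ HasFGFreeResolution R n M :=
  ⟨fun ⟨res, hres⟩ => (ResolutionData.ofProjectiveResolution res).hasFGFreeResolution hres,
   fun h => let ⟨D, hD⟩ := h.exists_resolutionData; ⟨D.toProjectiveResolution, hD⟩⟩

end

/-- `M ⊕ N` is of type `FP_n` iff both `M` and `N` are of type `FP_n`. -/
theorem stmt4 (R : Type) [Ring R] (n : ℕ)
    (M N : Type) [AddCommGroup M] [AddCommGroup N] [Module R M] [Module R N] :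
    IsTypeFP R (ModuleCat.of R (M × N)) n ↔
      IsTypeFP R (ModuleCat.of R M) n ∧ IsTypeFP R (ModuleCat.of R N) n := by
  simp only [isTypeFP_iff_hasFGFreeResolution]
  exact hasFGFreeResolution_prod_iff
end

section
/- Let (G,P) be a group pair, S a finite generating set of G, and α ∈ ℕ. Then there are only finitely many G-orbits of unicone subsets of G ⊔ G/P of diameter ≤ α; consequently the simplicial G-action on the unicone α-Rips complex is cocompact. -/
/-- Left `G`-action on the vertex set `G ⊔ G/P`. -/
def hatSMul {G ι : Type} [Group G] (P : ι → Subgroup G) (g : G) :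
    (G ⊕ (Σ i, G ⧸ P i)) → (G ⊕ (Σ i, G ⧸ P i))
  | .inl x => .inl (g * x)
  | .inr A => .inr ⟨A.1, g • A.2⟩

/-- A unicone subset of `G ⊔ G/P` of diameter `≤ α`: a finite subset `U` such that
`U ∩ G` has diameter `≤ α`, `U` contains at most one cone vertex `A`, and every
element of `U ∩ G` is at distance `≤ α` from the coset `A ⊆ G`. -/
def IsUniconeSet {G ι : Type} [Group G] [MetricSpace G] (P : ι → Subgroup G) (α : ℝ)
    (U : Set (G ⊕ (Σ i, G ⧸ P i))) : Prop :=
  U.Finite ∧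
  (∀ x y : G, Sum.inl x ∈ U → Sum.inl y ∈ U → dist x y ≤ α) ∧
  (∀ A B : Σ i, G ⧸ P i, Sum.inr A ∈ U → Sum.inr B ∈ U → A = B) ∧
  (∀ (x : G) (A : Σ i, G ⧸ P i), Sum.inl x ∈ U → Sum.inr A ∈ U →
    ∃ a : G, (QuotientGroup.mk a : G ⧸ P A.1) = A.2 ∧ dist x a ≤ α)

lemma hatSMul_hatSMul {G ι : Type} [Group G] (P : ι → Subgroup G) (g h : G)
    (v : G ⊕ (Σ i, G ⧸ P i)) : hatSMul P g (hatSMul P h v) = hatSMul P (g * h) v := by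
  cases v with
  | inl x => simp [hatSMul, mul_assoc]
  | inr A => simp [hatSMul, mul_smul]

lemma hatSMul_one {G ι : Type} [Group G] (P : ι → Subgroup G)
    (v : G ⊕ (Σ i, G ⧸ P i)) : hatSMul P 1 v = v := by
  cases v <;> simp [hatSMul]

lemma smul_mk_eq {G ι : Type} [Group G] (P : ι → Subgroup G) (i : ι) (g a : G) :
    g • (QuotientGroup.mk a : G ⧸ P i) = QuotientGroup.mk (g * a) := rfl

/-- For a finitely generated group `G` with (left-invariant, locally
finite) word metric and a nonempty finite collection `P` of subgroups, there are only
finitely many `G`-orbits of unicone subsets of `G ⊔ G/P` of diameter `≤ α`; i.e. there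
is a finite set `T` of unicone subsets such that every unicone subset of diameter `≤ α`
is a `G`-translate of a member of `T`.  (Hence the `G`-action on the unicone
`α`-Rips complex is cocompact.) -/
theorem stmt8 (G : Type) [Group G] [MetricSpace G]
    (hinv : ∀ g x y : G, dist (g * x) (g * y) = dist x y)
    (hball : ∀ (x : G) (r : ℝ), (Metric.closedBall x r).Finite)
    (ι : Type) [Finite ι] [Nonempty ι] (P : ι → Subgroup G) (α : ℕ) :
    ∃ T : Set (Set (G ⊕ (Σ i, G ⧸ P i))), T.Finite ∧
      ∀ U, IsUniconeSet P (α : ℝ) U →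
        ∃ g : G, ∃ W ∈ T, U = (hatSMul P g) '' W := by
  classical
  set B : Set G := Metric.closedBall (1 : G) (α : ℝ) with hB
  have hBfin : B.Finite := hball 1 α
  set M2 : Set (Σ i, G ⧸ P i) :=
    {A : Σ i, G ⧸ P i | ∃ a ∈ B, A.2 = QuotientGroup.mk a} with hM2
  set M : Set (G ⊕ (Σ i, G ⧸ P i)) := Sum.inl '' B ∪ Sum.inr '' M2 with hM
  have hM2fin : M2.Finite := by
    have hsub : M2 ⊆
        ⋃ i : ι, (fun a : G => (⟨i, QuotientGroup.mk a⟩ : Σ i, G ⧸ P i)) '' B := by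
      rintro ⟨i, q⟩ ⟨a, ha, hq⟩
      exact Set.mem_iUnion.2 ⟨i, ⟨a, ha, by simp [hq.symm]⟩⟩
    exact Set.Finite.subset (Set.finite_iUnion fun i => hBfin.image _) hsub
  have hMfin : M.Finite := (hBfin.image _).union (hM2fin.image _)
  refine ⟨{V | V ⊆ M}, hMfin.finite_subsets, ?_⟩
  intro U hU
  obtain ⟨hUfin, hdiam, huniq, hcone⟩ := hU
  suffices h : ∃ g : G, (hatSMul P g⁻¹) '' U ⊆ M by
    obtain ⟨g, hg⟩ := h
    refine ⟨g, (hatSMul P g⁻¹) '' U, hg, ?_⟩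
    rw [← Set.image_comp]
    ext v
    constructor
    · intro hv
      exact ⟨v, hv, by
        simp only [Function.comp_apply, hatSMul_hatSMul, mul_inv_cancel, hatSMul_one]⟩
    · rintro ⟨w, hw, rfl⟩
      simpa only [Function.comp_apply, hatSMul_hatSMul, mul_inv_cancel, hatSMul_one]
        using hw
  by_cases hx : ∃ x : G, Sum.inl x ∈ U
  · obtain ⟨x, hxU⟩ := hx
    refine ⟨x, ?_⟩
    rintro v ⟨w, hwU, rfl⟩
    cases w with
    | inl y =>
      refine Or.inl ⟨x⁻¹ * y, ?_, rfl⟩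
      have h1 : dist y x ≤ (α : ℝ) := hdiam y x hwU hxU
      have h2 : dist (x⁻¹ * y) 1 = dist y x := by
        have := hinv x (x⁻¹ * y) 1
        simpa [mul_assoc] using this.symm
      simp only [hB, Metric.mem_closedBall]
      rw [h2]; exact h1
    | inr A =>
      obtain ⟨a, haA, hda⟩ := hcone x A hxU hwU
      refine Or.inr ⟨⟨A.1, x⁻¹ • A.2⟩, ?_, rfl⟩
      refine ⟨x⁻¹ * a, ?_, ?_⟩
      · have h2 : dist (x⁻¹ * a) 1 = dist a x := by
          have := hinv x (x⁻¹ * a) 1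
          simpa [mul_assoc] using this.symm
        simp only [hB, Metric.mem_closedBall]
        rw [h2, dist_comm]; exact hda
      · show x⁻¹ • A.2 = QuotientGroup.mk (x⁻¹ * a)
        rw [← haA, smul_mk_eq]
  · by_cases hA : ∃ A : Σ i, G ⧸ P i, Sum.inr A ∈ U
    · obtain ⟨A, hAU⟩ := hA
      obtain ⟨a, ha⟩ := QuotientGroup.mk_surjective A.2
      refine ⟨a, ?_⟩
      rintro v ⟨w, hwU, rfl⟩
      cases w with
      | inl y => exact absurd ⟨y, hwU⟩ hx
      | inr C =>
        obtain rfl : C = A := huniq C A hwU hAU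
        refine Or.inr ⟨⟨C.1, a⁻¹ • C.2⟩, ?_, rfl⟩
        refine ⟨1, ?_, ?_⟩
        · simp [hB]
        · show a⁻¹ • C.2 = QuotientGroup.mk 1
          rw [← ha, smul_mk_eq]
          simp
    · refine ⟨1, ?_⟩
      rintro v ⟨w, hwU, rfl⟩
      cases w with
      | inl y => exact absurd ⟨y, hwU⟩ hx
      | inr C => exact absurd ⟨C, hwU⟩ hA
end

section
/- Let (G,P) be a group pair, S a finite generating set, and l ∈ ℕ. Then there are only finitely many G-orbits of unicone loops of length l in the coned-off Cayley graph Γ̂(G,P,S). -/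
/-- Adjacency in the coned-off Cayley graph `Γ̂(G, P, S)`: `g ~ g'` if `g⁻¹ g' ∈ S`
(or symmetrically), and `g ~ g'P` if `g ∈ g'P`. -/
def hatAdj {G ι : Type} [Group G] (P : ι → Subgroup G) (S : Finset G) :
    (G ⊕ (Σ i, G ⧸ P i)) → (G ⊕ (Σ i, G ⧸ P i)) → Prop
  | .inl g, .inl g' => g⁻¹ * g' ∈ S ∨ g'⁻¹ * g ∈ S
  | .inl g, .inr A => (QuotientGroup.mk g : G ⧸ P A.1) = A.2
  | .inr A, .inl g => (QuotientGroup.mk g : G ⧸ P A.1) = A.2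
  | .inr _, .inr _ => False

/-- A unicone loop of length `l` in `Γ̂(G, P, S)`, encoded as `γ : ℕ → V` with cyclic
adjacency conditions in positions `< l` and at most one position `< l` carrying a cone
vertex. -/
def IsUniconeLoop {G ι : Type} [Group G] (P : ι → Subgroup G) (S : Finset G) (l : ℕ)
    (γ : ℕ → G ⊕ (Σ i, G ⧸ P i)) : Prop :=
  (∀ k, k < l → hatAdj P S (γ k) (γ ((k + 1) % l))) ∧
  (∀ j k, j < l → k < l → (γ j).isRight → (γ k).isRight → j = k)

open scoped Pointwise

private lemma modAddOne' (a l : ℕ) : (a % l + 1) % l = (a + 1) % l := by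
  conv_rhs => rw [Nat.add_mod]
  rw [Nat.add_mod (a % l) 1, Nat.mod_mod_of_dvd a dvd_rfl]

private lemma modAddLeft' (x y l : ℕ) : (x % l + y) % l = (x + y) % l := by
  rw [Nat.add_mod x y, Nat.add_mod (x % l) y, Nat.mod_mod_of_dvd x dvd_rfl]

private lemma modAddRight' (x y l : ℕ) : (x + y % l) % l = (x + y) % l := by
  rw [Nat.add_mod x y, Nat.add_mod x (y % l), Nat.mod_mod_of_dvd y dvd_rfl]

private lemma modAddInj' (l k0 n m : ℕ) (hn : n < l) (hm : m < l)
    (h : (k0 + n) % l = (k0 + m) % l) : n = m := by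
  have h2 : n ≡ m [MOD l] := Nat.ModEq.add_left_cancel' k0 h
  exact h2.eq_of_lt_of_lt hn hm

private lemma hatSMul_inv {G ι : Type} [Group G] (P : ι → Subgroup G) (g : G)
    (x : G ⊕ (Σ i, G ⧸ P i)) : hatSMul P g (hatSMul P g⁻¹ x) = x := by
  cases x with
  | inl y => simp [hatSMul]
  | inr A => simp [hatSMul]

/-- For a group pair `(G, P)` with finite generating set `S` and
`l ∈ ℕ`, there are only finitely many `G`-orbits of unicone loops of length `l` in the
coned-off Cayley graph `Γ̂(G, P, S)`: there is a finite set `T` of loops such that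
every unicone loop of length `l` agrees (in positions `< l`) with a `G`-translate of a
member of `T`. -/
theorem stmt9 (G : Type) [Group G] (ι : Type) [Finite ι] [Nonempty ι]
    (P : ι → Subgroup G) (S : Finset G)
    (hS : Subgroup.closure (S : Set G) = ⊤) (l : ℕ) :
    ∃ T : Set (ℕ → G ⊕ (Σ i, G ⧸ P i)), T.Finite ∧
      ∀ γ, IsUniconeLoop P S l γ →
        ∃ g : G, ∃ δ ∈ T, ∀ k, k < l → γ k = hatSMul P g (δ k) := by
  classical
  set A : Set G := ((S : Set G) ∪ (S : Set G)⁻¹) ∪ {1} with hA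
  have h1A : (1 : G) ∈ A := by simp [hA]
  have hAfin : A.Finite :=
    ((S.finite_toSet).union (S.finite_toSet.inv)).union (Set.finite_singleton 1)
  have hpow : ∀ n, (A ^ n).Finite := by
    intro n
    induction n with
    | zero => rw [pow_zero]; exact Set.finite_one
    | succ n ih => rw [pow_succ]; exact ih.mul hAfin
  set V₀ : Set (G ⊕ (Σ i, G ⧸ P i)) :=
    (Sum.inl '' (A ^ l)) ∪
      (Set.range fun i : ι => (Sum.inr ⟨i, ((1 : G) : G ⧸ P i)⟩ : G ⊕ (Σ i, G ⧸ P i)))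
    with hV₀def
  have hV₀ : V₀.Finite := ((hpow l).image _).union (Set.finite_range _)
  set T : Set (ℕ → G ⊕ (Σ i, G ⧸ P i)) :=
    {δ | (∀ k, k < l → δ k ∈ V₀) ∧ ∀ k, l ≤ k → δ k = Sum.inl 1} with hTdef
  haveI : Finite ↥V₀ := hV₀.to_subtype
  have hTfin : T.Finite := by
    have hsub : T ⊆ Set.range (fun (f : Fin l → ↥V₀) (k : ℕ) =>
        if h : k < l then (f ⟨k, h⟩ : G ⊕ (Σ i, G ⧸ P i)) else Sum.inl 1) := by
      rintro δ ⟨hδ1, hδ2⟩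
      refine ⟨fun j => ⟨δ j, hδ1 j j.2⟩, ?_⟩
      funext k
      by_cases hk : k < l
      · simp [hk]
      · simp [hk, hδ2 k (le_of_not_gt hk)]
    exact (Set.finite_range _).subset hsub
  refine ⟨T, hTfin, ?_⟩
  intro γ ⟨hadj, huni⟩
  by_cases hl : l = 0
  · refine ⟨1, fun _ => Sum.inl 1, ⟨?_, fun k _ => rfl⟩, ?_⟩
    · intro k hk; omega
    · intro k hk; omega
  have hl0 : 0 < l := Nat.pos_of_ne_zero hl
  -- choose base point k0
  obtain ⟨k0, hk0l, g0, hg0, hcone⟩ :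
      ∃ k0, k0 < l ∧ ∃ g0, γ k0 = Sum.inl g0 ∧
        (∀ n, n < l → (γ ((k0 + n) % l)).isRight → n = l - 1) := by
    by_cases hc : ∃ c, c < l ∧ (γ c).isRight
    · obtain ⟨c, hcl, hcr⟩ := hc
      refine ⟨(c + 1) % l, Nat.mod_lt _ hl0, ?_⟩
      have hknotr : ¬ (γ ((c + 1) % l)).isRight := by
        intro hr
        have hkc := huni _ c (Nat.mod_lt _ hl0) hcl hr hcr
        have hadj' := hadj c hcl
        rw [hkc] at hadj'
        obtain ⟨y, hy⟩ := Sum.isRight_iff.1 hcr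
        rw [hy] at hadj'
        exact hadj'
      obtain ⟨g0, hg0⟩ := Sum.isLeft_iff.1 (Sum.not_isRight.1 hknotr)
      refine ⟨g0, hg0, ?_⟩
      intro n hn hr
      have h1 := huni _ c (Nat.mod_lt _ hl0) hcl hr hcr
      have h2 : ((c + 1) % l + (l - 1)) % l = c := by
        rw [modAddLeft']
        have : c + 1 + (l - 1) = c + l := by omega
        rw [this, Nat.add_mod_right, Nat.mod_eq_of_lt hcl]
      exact modAddInj' l ((c + 1) % l) n (l - 1) hn (by omega) (h1.trans h2.symm)
    · push_neg at hc
      have h0 : ¬ (γ 0).isRight := by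
        simpa using hc 0 hl0
      obtain ⟨g0, hg0⟩ := Sum.isLeft_iff.1 (Sum.not_isRight.1 h0)
      exact ⟨0, hl0, g0, hg0, fun n hn hr => absurd hr (by simpa using hc _ (Nat.mod_lt _ hl0))⟩
  -- the main induction along the loop
  have C : ∀ n, n < l → ¬ (γ ((k0 + n) % l)).isRight →
      ∃ h, γ ((k0 + n) % l) = Sum.inl h ∧ g0⁻¹ * h ∈ A ^ n := by
    intro n
    induction n with
    | zero =>
      intro _ _
      refine ⟨g0, ?_, ?_⟩
      · simpa [Nat.mod_eq_of_lt hk0l] using hg0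
      · simp [pow_zero]
    | succ n ih =>
      intro hn1 hnr
      have hnl : n < l := by omega
      have hprev : ¬ (γ ((k0 + n) % l)).isRight := by
        intro hr
        have := hcone n hnl hr
        omega
      obtain ⟨h, hh, hmem⟩ := ih hnl hprev
      have hq : ((k0 + n) % l + 1) % l = (k0 + (n + 1)) % l := by
        rw [modAddOne']
        rfl
      have hadjn := hadj ((k0 + n) % l) (Nat.mod_lt _ hl0)
      rw [hh, hq] at hadjn
      cases hγq : γ ((k0 + (n + 1)) % l) with
      | inr B => rw [hγq] at hnr; simp at hnr
      | inl h' =>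
        rw [hγq] at hadjn
        simp only [hatAdj] at hadjn
        have hstep : h⁻¹ * h' ∈ A := by
          rcases hadjn with hs | hs
          · exact Or.inl (Or.inl hs)
          · refine Or.inl (Or.inr ?_)
            rw [Set.mem_inv, mul_inv_rev, inv_inv]
            exact hs
        refine ⟨h', rfl, ?_⟩
        have heq : g0⁻¹ * h' = (g0⁻¹ * h) * (h⁻¹ * h') := by group
        rw [pow_succ, heq]
        exact Set.mul_mem_mul hmem hstep
  -- assemble the normalized loop
  refine ⟨g0, fun k => if k < l then hatSMul P g0⁻¹ (γ k) else Sum.inl 1, ⟨?_, ?_⟩, ?_⟩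
  · -- membership in V₀ for k < l
    intro k hk
    dsimp only
    rw [if_pos hk]
    set n : ℕ := (l + k - k0) % l with hn
    have hnl : n < l := Nat.mod_lt _ hl0
    have hkn : (k0 + n) % l = k := by
      rw [hn, modAddRight']
      have : k0 + (l + k - k0) = l + k := by omega
      rw [this, Nat.add_mod_left, Nat.mod_eq_of_lt hk]
    by_cases hr : (γ k).isRight
    · obtain ⟨⟨i, X⟩, hX⟩ := Sum.isRight_iff.1 hr
      have hnval : n = l - 1 := hcone n hnl (by rw [hkn]; exact hr)
      have hksucc : (k + 1) % l = k0 := by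
        rw [← hkn, modAddOne', hnval]
        have : k0 + (l - 1) + 1 = k0 + l := by omega
        rw [this, Nat.add_mod_right, Nat.mod_eq_of_lt hk0l]
      have hadjk := hadj k hk
      rw [hX, hksucc, hg0] at hadjk
      simp only [hatAdj] at hadjk
      have hXX : g0⁻¹ • X = ((1 : G) : G ⧸ P i) := by
        rw [← hadjk]
        show ((g0⁻¹ * g0 : G) : G ⧸ P i) = _
        rw [inv_mul_cancel]
      rw [hX]
      simp only [hatSMul]
      rw [hXX]
      exact Or.inr ⟨i, rfl⟩
    · obtain ⟨h, hh, hmem⟩ := C n hnl (by rw [hkn]; exact hr)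
      rw [hkn] at hh
      rw [hh]
      exact Or.inl ⟨g0⁻¹ * h, Set.pow_subset_pow_right h1A (le_of_lt hnl) hmem, rfl⟩
  · intro k hk
    dsimp only
    rw [if_neg (by omega)]
  · intro k hk
    dsimp only
    rw [if_pos hk, hatSMul_inv]
end

section
/- If a group pair (G,P) admits a quasi-isometry of pairs q : (G,P) → (H,Q) whose associated relation q̇ has bijective projections to G/P and to H/Q, then (G,P) and (H,Q) are strongly quasi-isometric. -/
/-- The coset `A = (i, gP i)` of the collection `P`, viewed as a subset of `G`. -/
def cosetSet {G : Type} [Group G] {ι : Type} (P : ι → Subgroup G)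
    (A : Σ i, G ⧸ P i) : Set G :=
  {g : G | (QuotientGroup.mk g : G ⧸ P A.1) = A.2}

/-- Pointwise form of `hdist(A, B) < M` for subsets of a metric space. -/
def PtHdistLt {H : Type} [MetricSpace H] (A B : Set H) (M : ℝ) : Prop :=
  (∀ a ∈ A, ∃ b ∈ B, dist a b < M) ∧ (∀ b ∈ B, ∃ a ∈ A, dist a b < M)

/-- If `q : (G, P) → (H, Q)` is an `(L, C, M)`-quasi-isometry of
pairs whose associated relation `q̇ = {(A, B) : hdist_H(q(A), B) < M}` has bijective
projections to `G/P` and to `H/Q` (i.e. each coset `A` is related to a unique `B`, and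
vice versa), then `(G, P)` and `(H, Q)` are strongly quasi-isometric: there exist
constants and Lipschitz maps of pairs `f = (f₁, f₂)` and `r = (r₁, r₂)` in both
directions such that `(f, r)` and `(r, f)` are quasi-retractions of pairs. -/
theorem stmt14 (G H : Type) [Group G] [Group H] [MetricSpace G] [MetricSpace H]
    (ι κ : Type) [Finite ι] [Nonempty ι] [Finite κ] [Nonempty κ]
    (P : ι → Subgroup G) (Q : κ → Subgroup H)
    (L C M : ℝ) (hL : 1 ≤ L) (hC : 0 ≤ C) (hM : 0 ≤ M)
    (q : G → H)
    (hqupper : ∀ x x' : G, dist (q x) (q x') ≤ L * dist x x' + C)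
    (hqlower : ∀ x x' : G, dist x x' / L - C ≤ dist (q x) (q x'))
    (hqdense : ∀ h : H, ∃ g : G, dist (q g) h ≤ C)
    (hproj1 : ∀ A : Σ i, G ⧸ P i, ∃! B : Σ j, H ⧸ Q j,
      PtHdistLt (q '' cosetSet P A) (cosetSet Q B) M)
    (hproj2 : ∀ B : Σ j, H ⧸ Q j, ∃! A : Σ i, G ⧸ P i,
      PtHdistLt (q '' cosetSet P A) (cosetSet Q B) M) :
    ∃ (L' C' M' : ℝ), 1 ≤ L' ∧ 0 ≤ C' ∧ 0 ≤ M' ∧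
    ∃ (f₁ : G → H) (f₂ : (Σ i, G ⧸ P i) → (Σ j, H ⧸ Q j))
      (r₁ : H → G) (r₂ : (Σ j, H ⧸ Q j) → (Σ i, G ⧸ P i)),
      (∀ x x', dist (f₁ x) (f₁ x') ≤ L' * dist x x' + C') ∧
      (∀ y y', dist (r₁ y) (r₁ y') ≤ L' * dist y y' + C') ∧
      (∀ A, PtHdistLt (f₁ '' cosetSet P A) (cosetSet Q (f₂ A)) M') ∧
      (∀ B, PtHdistLt (r₁ '' cosetSet Q B) (cosetSet P (r₂ B)) M') ∧
      (∀ g : G, dist (r₁ (f₁ g)) g ≤ C') ∧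
      (∀ h : H, dist (f₁ (r₁ h)) h ≤ C') ∧
      (∀ A, r₂ (f₂ A) = A) ∧ (∀ B, f₂ (r₂ B) = B) := by

  classical
  set r₁ : H → G := fun h => (hqdense h).choose with hr₁
  have hr : ∀ h : H, dist (q (r₁ h)) h ≤ C := fun h => (hqdense h).choose_spec
  have hLpos : (0:ℝ) < L := lt_of_lt_of_le one_pos hL
  have key : ∀ x x' : G, dist x x' ≤ L * (dist (q x) (q x') + C) := by
    intro x x'
    have := hqlower x x'
    have h1 : dist x x' / L ≤ dist (q x) (q x') + C := by linarith
    calc dist x x' = L * (dist x x' / L) := by field_simp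
    _ ≤ L * (dist (q x) (q x') + C) := by
        exact mul_le_mul_of_nonneg_left h1 (le_of_lt hLpos)
  refine ⟨L, 3 * L * C, L * (M + 2 * C) + 1, hL, by nlinarith, by nlinarith,
    q, fun A => (hproj1 A).choose, r₁, fun B => (hproj2 B).choose, fun x x' => le_trans (hqupper x x') (by nlinarith [dist_nonneg (x := x) (y := x')]), ?_, ?_, ?_, ?_, ?_, ?_, ?_⟩
  · intro y y'
    have h1 := key (r₁ y) (r₁ y')
    have h2 : dist (q (r₁ y)) (q (r₁ y')) ≤ dist y y' + 2 * C := by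
      have := hr y; have := hr y'
      have := dist_triangle (q (r₁ y)) y (q (r₁ y'))
      have := dist_triangle y y' (q (r₁ y'))
      have := dist_comm (q (r₁ y')) y'
      linarith
    nlinarith [dist_nonneg (x := y) (y := y')]
  · intro A
    have hA := (hproj1 A).choose_spec.1
    constructor
    · rintro a ⟨g, hg, rfl⟩
      obtain ⟨b, hb, hab⟩ := hA.1 (q g) ⟨g, hg, rfl⟩
      exact ⟨b, hb, lt_of_lt_of_le hab (by nlinarith)⟩
    · intro b hb
      obtain ⟨a, ha, hab⟩ := hA.2 b hb
      exact ⟨a, ha, lt_of_lt_of_le hab (by nlinarith)⟩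
  · intro B
    have hB := (hproj2 B).choose_spec.1
    constructor
    · rintro a ⟨h, hh, rfl⟩
      obtain ⟨a', ⟨g, hg, rfl⟩, hd⟩ := hB.2 h hh
      refine ⟨g, hg, ?_⟩
      have h1 := key (r₁ h) g
      have h2 : dist (q (r₁ h)) (q g) ≤ C + M := by
        have := hr h
        have := dist_triangle (q (r₁ h)) h (q g)
        have := dist_comm (q g) h
        linarith [le_of_lt hd]
      calc dist (r₁ h) g ≤ L * (C + M + C) := by nlinarith
      _ < L * (M + 2 * C) + 1 := by linarith
    · intro g hg
      obtain ⟨b, hb, hd⟩ := hB.1 (q g) ⟨g, hg, rfl⟩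
      refine ⟨r₁ b, ⟨b, hb, rfl⟩, ?_⟩
      have h1 := key (r₁ b) g
      have h2 : dist (q (r₁ b)) (q g) ≤ C + M := by
        have := hr b
        have := dist_triangle (q (r₁ b)) b (q g)
        have := dist_comm (q g) b
        linarith [le_of_lt hd]
      calc dist (r₁ b) g ≤ L * (C + M + C) := by nlinarith
      _ < L * (M + 2 * C) + 1 := by linarith
  · intro g
    have h1 := key (r₁ (q g)) g
    have h2 := hr (q g)
    nlinarith
  · intro h
    have := hr h
    nlinarith
  · intro A
    exact ((hproj2 ((hproj1 A).choose)).choose_spec.2 A (hproj1 A).choose_spec.1).symm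
  · intro B
    exact ((hproj1 ((hproj2 B).choose)).choose_spec.2 B (hproj2 B).choose_spec.1).symm
end
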